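/- With notation as above, the function λ ↦ g(λ) = σ² + (σ²/n)Tr[S̃(Σ̂+λI)⁻¹] + λ(λα²/p − σ²/n)Tr[S̃(Σ̂+λI)⁻²] (S̃ diagonal PSD, Σ̂ symmetric PSD) attains its global minimum over λ ∈ (0,∞) at λ* = σ²p/(α²n): g(λ*) ≤ g(λ) for all λ > 0. -/

import Mathlib

/-!
With `a = α²/p` and `c = σ²/n`, `g(λ) = σ² + Tr[S̃ φ_λ(Σ̂)]` for the scalar function
`φ_λ(x) = ridgeRiskProfile a c λ x = c/(x+λ) + λ(λa - c)/(x+λ)² = (cx + aλ²)/(x+λ)²`,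
applied to `Σ̂` by the functional calculus. On the (nonnegative) spectrum of `Σ̂`,
`φ_λ(x) - φ_{c/a}(x) = x(aλ - c)²/((ax + c)(x+λ)²) ≥ 0`, so `φ_{c/a}(Σ̂) ≤ φ_λ(Σ̂)` in the Loewner
order, and `M ↦ Tr[S̃ M]` is monotone for that order because `S̃` is a nonnegative diagonal.
-/

open Matrix
open scoped MatrixOrder

noncomputable def ridgeRiskProfile (a c t x : ℝ) : ℝ :=
  c * (x + t)⁻¹ + t * (t * a - c) * ((x + t)⁻¹ * (x + t)⁻¹)

lemma ridgeRiskProfile_le {a c t x : ℝ} (ha : 0 < a) (hc : 0 < c) (ht : 0 < t) (hx : 0 ≤ x) :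
    ridgeRiskProfile a c (c / a) x ≤ ridgeRiskProfile a c t x := by
  have hxt : 0 < x + t := by positivity
  have hxs : 0 < a * x + c := by positivity
  have key : ridgeRiskProfile a c t x - ridgeRiskProfile a c (c / a) x
      = x * (a * t - c) ^ 2 / ((a * x + c) * (x + t) ^ 2) := by
    unfold ridgeRiskProfile
    field_simp
    ring
  rw [← sub_nonneg, key]
  positivity

namespace Matrix

variable {ι : Type*} [Fintype ι] [DecidableEq ι]

lemma continuousOn_spectrum {R Y : Type*} [Field R] [TopologicalSpace R] [T1Space R]
    [TopologicalSpace Y] (A : Matrix ι ι R) (f : R → Y) : ContinuousOn f (spectrum R A) :=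
  A.finite_spectrum.continuousOn f

lemma trace_diagonal_mul_nonneg {d : ι → ℝ} (hd : ∀ i, 0 ≤ d i) {M : Matrix ι ι ℝ}
    (hM : M.PosSemidef) : 0 ≤ (diagonal d * M).trace :=
  Finset.sum_nonneg fun i _ => by
    simpa only [diag_apply, diagonal_mul] using mul_nonneg (hd i) hM.diag_nonneg

lemma trace_diagonal_mul_mono {d : ι → ℝ} (hd : ∀ i, 0 ≤ d i) {M N : Matrix ι ι ℝ}
    (h : M ≤ N) : (diagonal d * M).trace ≤ (diagonal d * N).trace := by
  have := trace_diagonal_mul_nonneg hd (le_iff.mp h)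
  rwa [Matrix.mul_sub, trace_sub, sub_nonneg] at this

lemma cfc_add_const_eq_add_smul_one (S : Matrix ι ι ℝ) (hS : S.IsHermitian) (t : ℝ) :
    cfc (fun x => x + t) S = S + t • (1 : Matrix ι ι ℝ) := by
  rw [cfc_add_const t (fun x => x) S (ha := hS.isSelfAdjoint), cfc_id' ℝ S hS.isSelfAdjoint,
    Algebra.algebraMap_eq_smul_one]

lemma inv_add_smul_one_eq_cfc {S : Matrix ι ι ℝ} (hS : S.IsHermitian) {t : ℝ}
    (ht : ∀ x ∈ spectrum ℝ S, x + t ≠ 0) :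
    (S + t • (1 : Matrix ι ι ℝ))⁻¹ = cfc (fun x => (x + t)⁻¹) S := by
  refine Matrix.inv_eq_left_inv ?_
  rw [← cfc_add_const_eq_add_smul_one S hS, ← cfc_mul _ _ S (S.continuousOn_spectrum _),
    cfc_congr fun x hx => inv_mul_cancel₀ (ht x hx), cfc_const_one ℝ S]

lemma trace_mul_cfc_ridgeRiskProfile (D : Matrix ι ι ℝ) {S : Matrix ι ι ℝ} (hS : S.IsHermitian)
    (a c : ℝ) {t : ℝ} (ht : ∀ x ∈ spectrum ℝ S, x + t ≠ 0) :
    c * (D * (S + t • (1 : Matrix ι ι ℝ))⁻¹).trace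
        + t * (t * a - c) * (D * ((S + t • 1)⁻¹ * (S + t • 1)⁻¹)).trace
      = (D * cfc (ridgeRiskProfile a c t) S).trace := by
  have hcfc : cfc (ridgeRiskProfile a c t) S
      = c • (S + t • 1)⁻¹ + (t * (t * a - c)) • ((S + t • 1)⁻¹ * (S + t • 1)⁻¹) := by
    rw [inv_add_smul_one_eq_cfc hS ht,
      ← cfc_mul _ _ S (S.continuousOn_spectrum _) (S.continuousOn_spectrum _),
      ← cfc_const_mul c _ S (S.continuousOn_spectrum _),
      ← cfc_const_mul _ _ S (S.continuousOn_spectrum _),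
      ← cfc_add (a := S) _ _ (S.continuousOn_spectrum _) (S.continuousOn_spectrum _)]
    rfl
  rw [hcfc, Matrix.mul_add, Matrix.mul_smul, Matrix.mul_smul, trace_add, trace_smul, trace_smul,
    smul_eq_mul, smul_eq_mul]

end Matrix

/-- The function
`g(λ) = σ² + (σ²/n)Tr[S̃(Σ̂+λI)⁻¹] + λ(λα²/p − σ²/n)Tr[S̃(Σ̂+λI)⁻²]`
(`S̃` diagonal PSD, `Σ̂` symmetric PSD) attains its global minimum over `(0,∞)`
at `λ* = σ²p/(α²n)`. -/
theorem risk_global_min (p n : ℕ) (hp : 0 < p) (hn : 0 < n) (α σ : ℝ)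
    (hα : 0 < α) (hσ : 0 < σ)
    (S : Matrix (Fin p) (Fin p) ℝ) (hS : S.PosSemidef)
    (d : Fin p → ℝ) (hd : ∀ i, 0 ≤ d i) :
    let Stil : Matrix (Fin p) (Fin p) ℝ := Matrix.diagonal d
    let Q : ℝ → Matrix (Fin p) (Fin p) ℝ :=
      fun lam => (S + lam • (1 : Matrix (Fin p) (Fin p) ℝ))⁻¹
    let g : ℝ → ℝ := fun lam =>
      σ ^ 2 + (σ ^ 2 / (n : ℝ)) * Matrix.trace (Stil * Q lam)
        + lam * (lam * α ^ 2 / (p : ℝ) - σ ^ 2 / (n : ℝ)) *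
            Matrix.trace (Stil * (Q lam * Q lam))
    ∀ lam : ℝ, 0 < lam → g (σ ^ 2 * (p : ℝ) / (α ^ 2 * (n : ℝ))) ≤ g lam := by
  intro Stil Q g lam hlam
  set a := α ^ 2 / (p : ℝ)
  set c := σ ^ 2 / (n : ℝ)
  have ha : 0 < a := by positivity
  have hc : 0 < c := by positivity
  have hspec : ∀ x ∈ spectrum ℝ S, 0 ≤ x := fun x hx => spectrum_nonneg_of_nonneg hS.nonneg hx
  have hg : ∀ t, 0 < t → g t = σ ^ 2 + (Stil * cfc (ridgeRiskProfile a c t) S).trace := by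
    intro t ht
    rw [← trace_mul_cfc_ridgeRiskProfile Stil hS.isHermitian a c
      fun x hx => (add_pos_of_nonneg_of_pos (hspec x hx) ht).ne']
    change σ ^ 2 + c * _ + t * (t * α ^ 2 / p - c) * _ = _
    rw [mul_div_assoc, add_assoc]
  have hstar : σ ^ 2 * (p : ℝ) / (α ^ 2 * n) = c / a := by
    simp only [a, c]
    field_simp
  rw [hstar, hg _ (div_pos hc ha), hg lam hlam]
  exact add_le_add_right (trace_diagonal_mul_mono hd
    (cfc_mono (fun x hx => ridgeRiskProfile_le ha hc hlam (hspec x hx))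
      (S.continuousOn_spectrum _) (S.continuousOn_spectrum _))) _
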